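/- Let λ ∈ ℂ ∪ {∞}. Define the symmetric bilinear form θ_A on W_A(λ) by θ_A(x, y) = (coefficient of A_0 in x)·(coefficient of A_0 in y), i.e., θ_A(A_0, A_0) = 1 and θ_A vanishes on all other pairs of basis vectors. Then θ_A is a Leibniz 2-cocycle on W_A(λ): θ_A([x,y],z) = θ_A(x,[y,z]) + θ_A([x,z],y) for all x, y, z. Moreover, there do not exist an alternating bilinear map Ω : W_A(λ) × W_A(λ) → ℂ and a linear map ψ : W_A(λ) → ℂ such that θ_A(x,y) = Ω(x,y) − ψ([x,y]) for all x, y ∈ W_A(λ); in particular θ_A defines a nontrivial Leibniz cohomology class not coming from Lie algebra cohomology. -/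

import Mathlib

/-! No bracket of basis vectors has an `A₀`-component: only `⁅L_n, A_{-n}⁆` could, and its
structure constant `n - n + δ_{n,0} n(n+1)λ` vanishes. Hence every term of the cocycle identity
is zero, while `θ_A(A₀, A₀) = 1` although `Ω(A₀, A₀) - ψ ⁅A₀, A₀⁆ = 0` for alternating `Ω`. -/

/-- The coefficient `n(n+1)λ`, where `λ = ∞` (encoded by `none`) gives `n²`. -/
def lamTerm (lam : Option ℂ) (n : ℤ) : ℂ :=
  match lam with
  | some l => (n : ℂ) * ((n : ℂ) + 1) * l
  | none => (n : ℂ) ^ 2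

open Module

section LieAlgebra

variable {R L ι : Type*} [CommRing R] [LieRing L] [LieAlgebra R L]

theorem map_lie_eq_zero_of_forall_basis (b : Basis ι R L) (f : L →ₗ[R] R)
    (h : ∀ i j, f ⁅b i, b j⁆ = 0) (x y : L) : f ⁅x, y⁆ = 0 := by
  have hzero : (LieModule.toEnd R L L : L →ₗ[R] Module.End R L).compr₂ f = 0 :=
    b.ext fun i => b.ext fun j => by simpa using h i j
  simpa using LinearMap.congr_fun₂ hzero x y

theorem not_exists_alternating_sub_comp_lie (θ : L → L → R) {a : L} (ha : θ a a ≠ 0) :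
    ¬∃ (Ω : L →ₗ[R] L →ₗ[R] R) (ψ : L →ₗ[R] R),
      (∀ x, Ω x x = 0) ∧ ∀ x y, θ x y = Ω x y - ψ ⁅x, y⁆ := by
  rintro ⟨Ω, ψ, hΩ, hθ⟩
  exact ha (by simpa [hΩ] using hθ a a)

end LieAlgebra

theorem lamTerm_zero (lam : Option ℂ) : lamTerm lam 0 = 0 := by
  cases lam <;> simp [lamTerm]

theorem structureConstant_eq_zero_of_add_eq_zero (lam : Option ℂ) {n m : ℤ} (h : n + m = 0) :
    (n : ℂ) + m + (if m = 0 then lamTerm lam n else 0) = 0 := by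
  have hsum : (n : ℂ) + m = 0 := by exact_mod_cast h
  split_ifs with hm
  · obtain rfl : n = 0 := by omega
    simp [hm, lamTerm_zero]
  · simp [hsum]

section StructureConstants

variable (lam : Option ℂ) {L : Type} [LieRing L] [LieAlgebra ℂ L] (b : Basis (ℤ ⊕ ℤ) ℂ L)

theorem repr_lie_inl_inr_apply_inr_zero
    (hLA : ∀ n m : ℤ,
      ⁅b (Sum.inl n), b (Sum.inr m)⁆ =
        ((n : ℂ) + (m : ℂ) + (if m = 0 then lamTerm lam n else 0)) • b (Sum.inr (n + m)))
    (n m : ℤ) : b.repr ⁅b (Sum.inl n), b (Sum.inr m)⁆ (Sum.inr 0) = 0 := by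
  rw [hLA, map_smul, b.repr_self, Finsupp.smul_apply, Finsupp.single_apply]
  by_cases h : n + m = 0
  · simp [structureConstant_eq_zero_of_add_eq_zero lam h]
  · simp [h]

theorem repr_lie_apply_inr_zero
    (hLL : ∀ n m : ℤ,
      ⁅b (Sum.inl n), b (Sum.inl m)⁆ = ((m : ℂ) - (n : ℂ)) • b (Sum.inl (n + m)))
    (hLA : ∀ n m : ℤ,
      ⁅b (Sum.inl n), b (Sum.inr m)⁆ =
        ((n : ℂ) + (m : ℂ) + (if m = 0 then lamTerm lam n else 0)) • b (Sum.inr (n + m)))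
    (hAA : ∀ n m : ℤ, ⁅b (Sum.inr n), b (Sum.inr m)⁆ = 0) (x y : L) :
    b.repr ⁅x, y⁆ (Sum.inr 0) = 0 := by
  refine map_lie_eq_zero_of_forall_basis b ((Finsupp.lapply (Sum.inr 0)).comp b.repr.toLinearMap)
    (fun i j => ?_) x y
  simp only [LinearMap.comp_apply, LinearEquiv.coe_coe, Finsupp.lapply_apply]
  rcases i with n | n <;> rcases j with m | m
  · simp [hLL]
  · exact repr_lie_inl_inr_apply_inr_zero lam b hLA n m
  · rw [← lie_skew, map_neg, Finsupp.neg_apply, repr_lie_inl_inr_apply_inr_zero lam b hLA m n,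
      neg_zero]
  · simp [hAA]

end StructureConstants

/-- the symmetric bilinear form `θ_A(x, y) = (A_0-coefficient of x) ·
(A_0-coefficient of y)` on `W_A(λ)` is a Leibniz 2-cocycle, and it does not differ from an
alternating bilinear form by a Leibniz 2-coboundary `(x, y) ↦ ψ ⁅x, y⁆`. -/
theorem stmt_13 (lam : Option ℂ) (L : Type) [LieRing L] [LieAlgebra ℂ L]
    (b : Module.Basis (ℤ ⊕ ℤ) ℂ L)
    (hLL : ∀ n m : ℤ,
      ⁅b (Sum.inl n), b (Sum.inl m)⁆ = ((m : ℂ) - (n : ℂ)) • b (Sum.inl (n + m)))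
    (hLA : ∀ n m : ℤ,
      ⁅b (Sum.inl n), b (Sum.inr m)⁆ =
        ((n : ℂ) + (m : ℂ) + (if m = 0 then lamTerm lam n else 0)) • b (Sum.inr (n + m)))
    (hAA : ∀ n m : ℤ, ⁅b (Sum.inr n), b (Sum.inr m)⁆ = 0) :
    (∀ x y z : L,
      b.repr ⁅x, y⁆ (Sum.inr 0) * b.repr z (Sum.inr 0) =
        b.repr x (Sum.inr 0) * b.repr ⁅y, z⁆ (Sum.inr 0) +
          b.repr ⁅x, z⁆ (Sum.inr 0) * b.repr y (Sum.inr 0)) ∧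
    ¬∃ (Ω : L →ₗ[ℂ] L →ₗ[ℂ] ℂ) (ψ : L →ₗ[ℂ] ℂ),
      (∀ x : L, Ω x x = 0) ∧
      ∀ x y : L,
        b.repr x (Sum.inr 0) * b.repr y (Sum.inr 0) = Ω x y - ψ ⁅x, y⁆ := by
  have hbracket := repr_lie_apply_inr_zero lam b hLL hLA hAA
  refine ⟨fun x y z => by simp only [hbracket, zero_mul, mul_zero, add_zero], ?_⟩
  exact not_exists_alternating_sub_comp_lie (a := b (Sum.inr 0))
    (fun x y => b.repr x (Sum.inr 0) * b.repr y (Sum.inr 0)) (by simp)
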